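/- Let Ω1 and Ω2 be finite multisets of solution mappings with Ω1 domain-uniform, and let F be a selection formula. Define the errata difference Ω1 \\'_F Ω2 to keep, with its multiplicity, each μ1 ∈ Ω1 such that for every μ2 ∈ Ω2 either μ1 ≁ μ2, or μ1 ∼ μ2 and (μ1 ∪ μ2)(F) ≠ true (i.e. an error result is treated as false). Then Ω1 \\'_F Ω2 = Ω1 \ σ_F(Ω1 ⋈ Ω2) as an equality of multisets. -/
import Mathlib


open scoped Classical

noncomputable section

/-- A solution mapping: a finite partial function from variables to terms. -/
abbrev SMap (V T : Type) := Finmap (fun _ : V => T)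

variable {V T : Type} [DecidableEq V] [DecidableEq T]

/-- Two solution mappings are compatible if they agree on the
intersection of their domains. -/
def Compat (μ1 μ2 : SMap V T) : Prop :=
  ∀ x ∈ μ1, x ∈ μ2 → μ1.lookup x = μ2.lookup x

/-- Join of two multisets of solution mappings: unions of compatible pairs,
multiplicities multiply and add over all decompositions. -/
def mjoin (Ω1 Ω2 : Multiset (SMap V T)) : Multiset (SMap V T) :=
  Ω1.bind fun μ1 => (Ω2.filter fun μ2 => Compat μ1 μ2).map fun μ2 => μ1 ∪ μ2

/-- Simple difference: keep (with multiplicity) the mappings of `Ω1`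
incompatible with every element of `Ω2`. -/
def msdiff (Ω1 Ω2 : Multiset (SMap V T)) : Multiset (SMap V T) :=
  Ω1.filter fun μ1 => ∀ μ2 ∈ Ω2, ¬ Compat μ1 μ2

/-- SPARQL minus: keep (with multiplicity) the mappings of `Ω1` such that every
element of `Ω2` is incompatible with it or has disjoint domain. -/
def sminus (Ω1 Ω2 : Multiset (SMap V T)) : Multiset (SMap V T) :=
  Ω1.filter fun μ1 => ∀ μ2 ∈ Ω2, ¬ Compat μ1 μ2 ∨ μ1.keys ∩ μ2.keys = ∅

/-- Domain of a multiset of mappings: the union of the domains of its elements. -/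
def mdom (Ω : Multiset (SMap V T)) : Finset V := (Ω.map Finmap.keys).sup

/-- A multiset of mappings is domain-uniform when all its elements have the
same domain. -/
def DomUniform (Ω : Multiset (SMap V T)) : Prop :=
  ∀ μ1 ∈ Ω, ∀ μ2 ∈ Ω, Finmap.keys μ1 = Finmap.keys μ2

/-- Three truth values: true, false, error. -/
inductive TV where | t | f | e
deriving DecidableEq

/-- Strong Kleene conjunction. -/
def TV.andTV : TV → TV → TV
  | .t, q => q
  | .f, _ => .f
  | .e, .t => .e
  | .e, .f => .f
  | .e, .e => .e

/-- Strong Kleene disjunction. -/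
def TV.orTV : TV → TV → TV
  | .t, _ => .t
  | .f, q => q
  | .e, .t => .t
  | .e, .f => .e
  | .e, .e => .e

/-- Three-valued negation. -/
def TV.notTV : TV → TV
  | .t => .f
  | .f => .t
  | .e => .e

/-- Selection formulas, built from atoms `x = c`, `x = y` and `bound x`. -/
inductive SForm (V T : Type) where
  | eqc : V → T → SForm V T
  | eqv : V → V → SForm V T
  | bound : V → SForm V T
  | fand : SForm V T → SForm V T → SForm V T
  | for' : SForm V T → SForm V T → SForm V T
  | fnot : SForm V T → SForm V T

/-- Three-valued evaluation of a selection formula on a solution mapping. -/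
def evalF (μ : SMap V T) : SForm V T → TV
  | .eqc x c =>
    match μ.lookup x with
    | some a => if a = c then .t else .f
    | none => .e
  | .eqv x y =>
    match μ.lookup x, μ.lookup y with
    | some a, some b => if a = b then .t else .f
    | some _, none => .e
    | none, _ => .e
  | .bound x => if x ∈ μ then .t else .f
  | .fand F1 F2 => (evalF μ F1).andTV (evalF μ F2)
  | .for' F1 F2 => (evalF μ F1).orTV (evalF μ F2)
  | .fnot F1 => (evalF μ F1).notTV

/-- Selection: keep (with multiplicity) the mappings evaluating `F` to true. -/
def sel (F : SForm V T) (Ω : Multiset (SMap V T)) : Multiset (SMap V T) :=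
  Ω.filter fun μ => evalF μ F = .t

/-- W3C difference: keep (with multiplicity) the mappings `μ1` of `Ω1` such that
every `μ2 ∈ Ω2` is incompatible with `μ1`, or compatible with
`(μ1 ∪ μ2)(F) = false`. -/
def wdiff (F : SForm V T) (Ω1 Ω2 : Multiset (SMap V T)) : Multiset (SMap V T) :=
  Ω1.filter fun μ1 => ∀ μ2 ∈ Ω2,
    ¬ Compat μ1 μ2 ∨ (Compat μ1 μ2 ∧ evalF (μ1 ∪ μ2) F = .f)

end

/-- The errata difference: an error result of the filter is treated as false. -/
noncomputable def ediff {V T : Type} [DecidableEq V] [DecidableEq T]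
    (F : SForm V T) (Ω1 Ω2 : Multiset (SMap V T)) : Multiset (SMap V T) :=
  Ω1.filter fun μ1 => ∀ μ2 ∈ Ω2,
    ¬ Compat μ1 μ2 ∨ (Compat μ1 μ2 ∧ evalF (μ1 ∪ μ2) F ≠ TV.t)

/-- under the errata semantics, the difference equals the simple
difference with the selection of the join, provided `Ω1` is domain-uniform. -/
theorem stmt_1 {V T : Type} [DecidableEq V] [DecidableEq T]
    (Ω1 Ω2 : Multiset (SMap V T)) (F : SForm V T)
    (h1 : DomUniform Ω1) :
    ediff F Ω1 Ω2 = msdiff Ω1 (sel F (mjoin Ω1 Ω2)) := by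
  classical
  unfold ediff msdiff
  apply Multiset.filter_congr
  intro μ1 hμ1
  constructor
  · -- forward
    intro h ν hν hcompat
    simp only [sel, mjoin, Multiset.mem_filter, Multiset.mem_bind,
      Multiset.mem_map] at hν
    obtain ⟨⟨μ1', hμ1', μ2, hμ2', rfl⟩, htrue⟩ := hν
    obtain ⟨hμ2, hC'⟩ := hμ2'
    have hkeys : μ1.keys = μ1'.keys := h1 μ1 hμ1 μ1' hμ1'
    -- μ1 agrees with μ1' everywhere, so μ1 = μ1'
    have heq : μ1 = μ1' := by
      apply Finmap.ext_lookup
      intro x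
      by_cases hx : x ∈ μ1
      · have hx' : x ∈ μ1' := by
          rw [← Finmap.mem_keys, ← hkeys, Finmap.mem_keys]; exact hx
        have hxu : x ∈ μ1' ∪ μ2 := Finmap.mem_union.mpr (Or.inl hx')
        have := hcompat x hx hxu
        rwa [Finmap.lookup_union_left hx'] at this
      · have hx' : x ∉ μ1' := by
          rw [← Finmap.mem_keys, ← hkeys, Finmap.mem_keys]; exact hx
        rw [Finmap.lookup_eq_none.mpr hx, Finmap.lookup_eq_none.mpr hx']
    subst heq
    rcases h μ2 hμ2 with hnc | ⟨_, hne⟩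
    · exact hnc hC'
    · exact hne htrue
  · -- backward
    intro h μ2 hμ2
    by_cases hC : Compat μ1 μ2
    · refine Or.inr ⟨hC, fun ht => ?_⟩
      have hν : μ1 ∪ μ2 ∈ sel F (mjoin Ω1 Ω2) := by
        simp only [sel, mjoin, Multiset.mem_filter, Multiset.mem_bind,
          Multiset.mem_map]
        exact ⟨⟨μ1, hμ1, μ2, ⟨hμ2, hC⟩, rfl⟩, ht⟩
      apply h _ hν
      intro x hx _
      rw [Finmap.lookup_union_left hx]
    · exact Or.inl hC
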